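/- For integers k₁, k₂ ≥ 1, the second-order coefficient of the unequal-truncation Hessian operator D^{k₂} ∘ D^{k₁} equals 1: (1/2)[c_0^{k₂} ∑_{m=1}^{k₁} (-1)^{2-m} C(k₁,m) m + c_0^{k₁} ∑_{l=1}^{k₂} (-1)^{2-l} C(k₂,l) l + ∑_{l=1}^{k₂} ∑_{m=1}^{k₁} (-1)^{2-l-m} C(k₂,l) C(k₁,m) (l+m)²/(l·m)] = 1, where c_0^k = ∑_{j=1}^k 1/j. -/

import Mathlib

/-!
Write `a_k(m) = (-1)^m C(k,m)`, so that `(-1)^(2-m) = (-1)^m` turns every sign into these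
weights. Splitting `(l + m)^2 / (l m) = l / m + m / l + 2` factors the double sum into products
of single sums. Over `m = 1, …, k` one has `∑ a_k(m) = -1` (binomial theorem at `-1`) and
`∑ a_k(m) / m = -H_k` (Pascal's rule and induction). Hence the double sum equals
`-H_{k₁} B_{k₂} - H_{k₂} B_{k₁} + 2` with `B_k = ∑ a_k(m) m`, and the first two terms cancel
the two remaining summands exactly, whatever the value of `B_k`.
-/

open Finset

lemma neg_one_zpow_two_sub {R : Type*} [DivisionRing R] (n : ℕ) :
    (-1 : R) ^ ((2 : ℤ) - n) = (-1) ^ n := by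
  rw [zpow_sub₀ (neg_ne_zero.mpr one_ne_zero), zpow_natCast, zpow_two, neg_one_mul, neg_neg,
    one_div, ← inv_pow, inv_neg_one]

lemma neg_one_zpow_two_sub_sub {R : Type*} [DivisionRing R] (l m : ℕ) :
    (-1 : R) ^ ((2 : ℤ) - l - m) = (-1) ^ l * (-1) ^ m := by
  rw [sub_sub, ← Nat.cast_add, neg_one_zpow_two_sub, pow_add]

lemma sum_Icc_one_neg_one_pow_mul_choose {R : Type*} [Ring R] {k : ℕ} (hk : k ≠ 0) :
    ∑ m ∈ Icc 1 k, (-1 : R) ^ m * k.choose m = -1 := by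
  have h := congrArg (Int.cast : ℤ → R) (Int.alternating_sum_range_choose_of_ne hk)
  push_cast at h
  rw [range_eq_Ico, sum_eq_sum_Ico_succ_bot (Nat.zero_lt_succ k), zero_add,
    Nat.succ_eq_add_one, Ico_add_one_right_eq_Icc] at h
  simp only [pow_zero, Nat.choose_zero_right, Nat.cast_one, one_mul] at h
  exact eq_neg_of_add_eq_zero_right h

lemma sum_Icc_one_neg_one_pow_mul_choose_div {K : Type*} [Field K] [CharZero K] (k : ℕ) :
    ∑ m ∈ Icc 1 k, (-1 : K) ^ m * k.choose m / m = -∑ j ∈ Icc 1 k, 1 / (j : K) := by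
  induction k with
  | zero => simp
  | succ n ih =>
    have hsplit : ∀ m ∈ Icc 1 (n + 1), (-1 : K) ^ m * (n + 1).choose m / m
        = (-1) ^ m * n.choose m / m + (-1) ^ m * (n + 1).choose m / (n + 1) := by
      intro m hm
      obtain ⟨j, rfl⟩ := Nat.exists_eq_add_of_le' (mem_Icc.mp hm).1
      have hdiv : ((n + 1).choose (j + 1) : K) / (n + 1) = n.choose j / (j + 1) := by
        rw [div_eq_div_iff (Nat.cast_add_one_ne_zero n) (Nat.cast_add_one_ne_zero j)]
        norm_cast
        rw [mul_comm (n.choose j)]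
        exact (Nat.add_one_mul_choose_eq n j).symm
      rw [mul_div_assoc _ _ ((n : K) + 1), hdiv, Nat.choose_succ_succ']
      push_cast
      ring
    have htop : ∑ m ∈ Icc 1 (n + 1), (-1 : K) ^ m * n.choose m / m
        = ∑ m ∈ Icc 1 n, (-1 : K) ^ m * n.choose m / m := by
      simp [sum_Icc_succ_top]
    rw [sum_congr rfl hsplit, sum_add_distrib, htop, ih, ← sum_div,
      sum_Icc_one_neg_one_pow_mul_choose n.succ_ne_zero, sum_Icc_succ_top (by omega)]
    push_cast
    ring

lemma sum_sum_mul_mul_add_sq_div_mul {ι κ K : Type*} [Field K] (s : Finset ι) (t : Finset κ)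
    (f x : ι → K) (g y : κ → K) (hx : ∀ i ∈ s, x i ≠ 0) (hy : ∀ j ∈ t, y j ≠ 0) :
    ∑ i ∈ s, ∑ j ∈ t, f i * g j * (x i + y j) ^ 2 / (x i * y j)
      = (∑ i ∈ s, f i * x i) * ∑ j ∈ t, g j / y j
        + (∑ i ∈ s, f i / x i) * ∑ j ∈ t, g j * y j
        + 2 * ((∑ i ∈ s, f i) * ∑ j ∈ t, g j) := by
  have hterm : ∀ i ∈ s, ∀ j ∈ t, f i * g j * (x i + y j) ^ 2 / (x i * y j)
      = f i * x i * (g j / y j) + f i / x i * (g j * y j) + 2 * (f i * g j) := by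
    intro i hi j hj
    field_simp [hx i hi, hy j hj]
    ring
  rw [sum_congr rfl fun i hi => sum_congr rfl (hterm i hi)]
  simp only [sum_add_distrib, sum_mul_sum]
  simp only [mul_sum]

theorem stmt12 (k₁ k₂ : ℕ) (hk₁ : 1 ≤ k₁) (hk₂ : 1 ≤ k₂) :
    (1 / 2 : ℚ) *
      ((∑ j ∈ Finset.Icc 1 k₂, (1 : ℚ) / (j : ℚ))
          * ∑ m ∈ Finset.Icc 1 k₁, (-1 : ℚ) ^ ((2 : ℤ) - (m : ℤ)) * (k₁.choose m : ℚ) * (m : ℚ)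
        + (∑ j ∈ Finset.Icc 1 k₁, (1 : ℚ) / (j : ℚ))
            * ∑ l ∈ Finset.Icc 1 k₂, (-1 : ℚ) ^ ((2 : ℤ) - (l : ℤ)) * (k₂.choose l : ℚ) * (l : ℚ)
        + ∑ l ∈ Finset.Icc 1 k₂, ∑ m ∈ Finset.Icc 1 k₁,
            (-1 : ℚ) ^ ((2 : ℤ) - (l : ℤ) - (m : ℤ))
              * (k₂.choose l : ℚ) * (k₁.choose m : ℚ)
              * ((l : ℚ) + (m : ℚ)) ^ 2 / ((l : ℚ) * (m : ℚ))) = 1 := by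
  have hsummand (l m : ℕ) : (-1 : ℚ) ^ ((2 : ℤ) - l - m) * k₂.choose l * k₁.choose m
        * ((l : ℚ) + m) ^ 2 / (l * m)
      = (-1) ^ l * k₂.choose l * ((-1) ^ m * k₁.choose m) * ((l : ℚ) + m) ^ 2 / (l * m) := by
    rw [neg_one_zpow_two_sub_sub]
    ring
  have hcast_ne_zero (k n : ℕ) (hn : n ∈ Icc 1 k) : (n : ℚ) ≠ 0 :=
    Nat.cast_ne_zero.mpr (Nat.one_le_iff_ne_zero.mp (mem_Icc.mp hn).1)
  simp only [hsummand, neg_one_zpow_two_sub]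
  rw [sum_sum_mul_mul_add_sq_div_mul _ _ (fun l => (-1 : ℚ) ^ l * k₂.choose l) (fun l => (l : ℚ))
    (fun m => (-1 : ℚ) ^ m * k₁.choose m) (fun m => (m : ℚ))
    (hcast_ne_zero k₂) (hcast_ne_zero k₁),
    sum_Icc_one_neg_one_pow_mul_choose_div, sum_Icc_one_neg_one_pow_mul_choose_div,
    sum_Icc_one_neg_one_pow_mul_choose (by omega), sum_Icc_one_neg_one_pow_mul_choose (by omega)]
  ring
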